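/- arXiv:1509.03307 — 3 statements merged into one kernel-verified Lean document; each statement's English description precedes it below -/
import Mathlib

section
/- Let (Λ,σ), (Λ',σ') be subshifts, G a finite group, τ : Λ → G, τ' : Λ' → G continuous. Suppose Ψ : G × Λ → G × Λ' is a homeomorphism satisfying Ψ∘σ_{G,τ} = σ_{G,τ'}∘Ψ and Ψ∘ρ_g = ρ'_g∘Ψ for all g ∈ G. Then there exist a topological conjugacy Φ : Λ → Λ' and a continuous γ : Λ → G such that τ(x) = γ(x)·τ'(Φ(x))·γ(σ(x))⁻¹ for all x ∈ Λ, and Ψ(g,x) = (g·γ(x), Φ(x)). -/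
/-- conversely, a `G`-equivariant topological conjugacy `Ψ` between the
skew products comes from a topological conjugacy `Φ : Λ → Λ'` and a continuous
transfer function `γ` with `τ(x) = γ(x)·τ'(Φ(x))·γ(σ(x))⁻¹` and `Ψ(g,x) = (g·γ(x), Φ(x))`. -/
theorem stmt_4 {A A' : Type*} [Fintype A] [TopologicalSpace A] [DiscreteTopology A]
    [Fintype A'] [TopologicalSpace A'] [DiscreteTopology A']
    {G : Type*} [Group G] [Fintype G] [TopologicalSpace G] [DiscreteTopology G]
    (Λ : Set (ℤ → A)) (Λ' : Set (ℤ → A'))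
    (hcl : IsClosed Λ) (hcl' : IsClosed Λ')
    (SΛ : Λ → Λ) (hSΛ : ∀ (x : Λ) (i : ℤ), (SΛ x : ℤ → A) i = (x : ℤ → A) (i + 1))
    (SΛ' : Λ' → Λ') (hSΛ' : ∀ (y : Λ') (i : ℤ), (SΛ' y : ℤ → A') i = (y : ℤ → A') (i + 1))
    (τ : Λ → G) (hτ : Continuous τ) (τ' : Λ' → G) (hτ' : Continuous τ')
    (Ψ : (G × Λ) ≃ₜ (G × Λ'))
    (hΨσ : ∀ p : G × Λ, Ψ (p.1 * τ p.2, SΛ p.2) = ((Ψ p).1 * τ' (Ψ p).2, SΛ' (Ψ p).2))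
    (hΨρ : ∀ g : G, ∀ p : G × Λ, Ψ (g * p.1, p.2) = (g * (Ψ p).1, (Ψ p).2)) :
    ∃ (Φ : Λ ≃ₜ Λ') (γ : Λ → G), Continuous γ ∧
      (∀ x : Λ, Φ (SΛ x) = SΛ' (Φ x)) ∧
      (∀ x : Λ, τ x = γ x * τ' (Φ x) * (γ (SΛ x))⁻¹) ∧
      (∀ (g : G) (x : Λ), Ψ (g, x) = (g * γ x, Φ x)) := by
  set γ : Λ → G := fun x => (Ψ (1, x)).1 with hγdef
  set F : Λ → Λ' := fun x => (Ψ (1, x)).2 with hFdef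
  set γ' : Λ' → G := fun y => (Ψ.symm (1, y)).1 with hγ'def
  set F' : Λ' → Λ := fun y => (Ψ.symm (1, y)).2 with hF'def
  have key : ∀ (g : G) (x : Λ), Ψ (g, x) = (g * γ x, F x) := by
    intro g x
    have := hΨρ g (1, x)
    simpa using this
  have hsymmρ : ∀ (g : G) (q : G × Λ'), Ψ.symm (g * q.1, q.2) =
      (g * (Ψ.symm q).1, (Ψ.symm q).2) := by
    intro g q
    have h := hΨρ g (Ψ.symm q)
    rw [Ψ.apply_symm_apply] at h
    have := congrArg Ψ.symm h
    simpa using this.symm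
  have key' : ∀ (g : G) (y : Λ'), Ψ.symm (g, y) = (g * γ' y, F' y) := by
    intro g y
    have := hsymmρ g (1, y)
    simpa using this
  have hFF' : ∀ x : Λ, F' (F x) = x := by
    intro x
    have h0 : ((γ x, F x) : G × Λ') = Ψ (1, x) := by simpa using (key 1 x).symm
    have h1 : Ψ.symm (γ x, F x) = (1, x) := by rw [h0, Ψ.symm_apply_apply]
    rw [key' (γ x) (F x)] at h1
    exact congrArg Prod.snd h1
  have hF'F : ∀ y : Λ', F (F' y) = y := by
    intro y
    have h0 : ((γ' y, F' y) : G × Λ) = Ψ.symm (1, y) := by simpa using (key' 1 y).symm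
    have h1 : Ψ (γ' y, F' y) = (1, y) := by rw [h0, Ψ.apply_symm_apply]
    rw [key (γ' y) (F' y)] at h1
    exact congrArg Prod.snd h1
  have hFc : Continuous F :=
    continuous_snd.comp (Ψ.continuous.comp (Continuous.prodMk continuous_const continuous_id))
  have hF'c : Continuous F' :=
    continuous_snd.comp (Ψ.symm.continuous.comp (Continuous.prodMk continuous_const continuous_id))
  have hγc : Continuous γ :=
    continuous_fst.comp (Ψ.continuous.comp (Continuous.prodMk continuous_const continuous_id))
  refine ⟨⟨⟨F, F', hFF', hF'F⟩, hFc, hF'c⟩, γ, hγc, ?_, ?_, ?_⟩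
  · intro x
    have h := hΨσ (1, x)
    simp only [one_mul] at h
    rw [key (τ x) (SΛ x), key 1 x] at h
    have h2 := congrArg Prod.snd h
    simpa using h2
  · intro x
    have h := hΨσ (1, x)
    simp only [one_mul] at h
    rw [key (τ x) (SΛ x), key 1 x] at h
    have h1 := congrArg Prod.fst h
    simp only [one_mul] at h1
    have : τ x * γ (SΛ x) = γ x * τ' (F x) := h1
    exact eq_mul_inv_of_mul_eq (this : τ x * γ (SΛ x) = _)
  · intro g x
    exact key g x
end

section
/- Let Λ be a subshift over a finite alphabet Σ, G a finite group, and ℓ, ℓ' : Σ → G maps. Define τ_ℓ(x) = ℓ(x_0) and τ_{ℓ'}(x) = ℓ'(x_0). Suppose γ : Λ → G is continuous and satisfies τ_ℓ(x) = γ(x)·τ_{ℓ'}(x)·γ(σ(x))⁻¹ for all x ∈ Λ. If x, y ∈ Λ satisfy x_n = y_n for all n ≥ 0, then γ(x) = γ(y). -/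
/-- Uniform local constancy: a continuous map from a closed subshift-like set
to a discrete space is determined by a finite central window. -/
theorem unif_window {A : Type*} [Fintype A] [TopologicalSpace A] [DiscreteTopology A]
    {G : Type*} [TopologicalSpace G] [DiscreteTopology G]
    (Λ : Set (ℤ → A)) (hcl : IsClosed Λ) (γ : Λ → G) (hγ : Continuous γ) :
    ∃ N : ℕ, ∀ x y : Λ, (∀ n : ℤ, |n| ≤ (N : ℤ) → (x : ℤ → A) n = (y : ℤ → A) n) →
      γ x = γ y := by
  haveI : CompactSpace Λ := isCompact_iff_compactSpace.mp hcl.isCompact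
  have h : ∀ x : Λ, ∃ I : Finset ℤ,
      ∀ y : Λ, (∀ i ∈ I, (y : ℤ → A) i = (x : ℤ → A) i) → γ y = γ x := by
    intro x
    have hopen : IsOpen (γ ⁻¹' {γ x}) := (isOpen_discrete _).preimage hγ
    rw [isOpen_induced_iff] at hopen
    obtain ⟨V, hV, hVeq⟩ := hopen
    have hxV : (x : ℤ → A) ∈ V := by
      have : x ∈ Subtype.val ⁻¹' V := by rw [hVeq]; simp
      exact this
    obtain ⟨I, u, hu, hsub⟩ := (isOpen_pi_iff.mp hV) x hxV
    refine ⟨I, fun y hy => ?_⟩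
    have hyV : (y : ℤ → A) ∈ V := by
      apply hsub
      intro i hi
      rw [hy i hi]
      exact (hu i hi).2
    have : y ∈ γ ⁻¹' {γ x} := by rw [← hVeq]; exact hyV
    simpa using this
  choose I hI using h
  have hCopen : ∀ x : Λ, IsOpen {y : Λ | ∀ i ∈ I x, (y : ℤ → A) i = (x : ℤ → A) i} := by
    intro x
    have : {y : Λ | ∀ i ∈ I x, (y : ℤ → A) i = (x : ℤ → A) i} =
        ⋂ i ∈ I x, (fun y : Λ => (y : ℤ → A) i) ⁻¹' {(x : ℤ → A) i} := by
      ext y; simp [Set.mem_iInter]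
    rw [this]
    exact isOpen_biInter_finset fun i _ =>
      (isOpen_discrete _).preimage ((continuous_apply i).comp continuous_subtype_val)
  have hcover : (Set.univ : Set Λ) ⊆
      ⋃ x : Λ, {y : Λ | ∀ i ∈ I x, (y : ℤ → A) i = (x : ℤ → A) i} := by
    intro x _
    exact Set.mem_iUnion.mpr ⟨x, fun i _ => rfl⟩
  obtain ⟨t, ht⟩ := isCompact_univ.elim_finite_subcover _ hCopen hcover
  refine ⟨t.sup fun z => (I z).sup fun i => i.natAbs, fun x y hxy => ?_⟩
  obtain ⟨z, hzt, hz⟩ := Set.mem_iUnion₂.mp (ht (Set.mem_univ x))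
  have hyz : ∀ i ∈ I z, (y : ℤ → A) i = (z : ℤ → A) i := by
    intro i hi
    have hle : i.natAbs ≤ t.sup fun z => (I z).sup fun i => i.natAbs :=
      le_trans (Finset.le_sup hi) (Finset.le_sup (f := fun z => (I z).sup fun i => i.natAbs) hzt)
    have : |i| ≤ ((t.sup fun z => (I z).sup fun i => i.natAbs : ℕ) : ℤ) := by
      rwa [Int.abs_eq_natAbs, Int.ofNat_le]
    rw [← hxy i this]
    exact hz i hi
  rw [hI z y hyz, hI z x hz]

/-- if `γ` is a continuous transfer function between the one-block skewing
functions `τ_ℓ` and `τ_{ℓ'}` on a subshift `Λ`, then `γ(x)` depends only on the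
right half `(x_n)_{n ≥ 0}` of `x`. -/
theorem stmt_5 {A : Type*} [Fintype A] [TopologicalSpace A] [DiscreteTopology A]
    {G : Type*} [Group G] [Fintype G] [TopologicalSpace G] [DiscreteTopology G]
    (Λ : Set (ℤ → A)) (hcl : IsClosed Λ)
    (hinv : (fun x : ℤ → A => fun i => x (i + 1)) '' Λ = Λ)
    (S : Λ → Λ) (hS : ∀ (x : Λ) (i : ℤ), (S x : ℤ → A) i = (x : ℤ → A) (i + 1))
    (ℓ ℓ' : A → G)
    (γ : Λ → G) (hγ : Continuous γ)
    (hco : ∀ x : Λ, ℓ ((x : ℤ → A) 0) = γ x * ℓ' ((x : ℤ → A) 0) * (γ (S x))⁻¹) :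
    ∀ x y : Λ, (∀ n : ℤ, 0 ≤ n → (x : ℤ → A) n = (y : ℤ → A) n) → γ x = γ y := by
  obtain ⟨N, hN⟩ := unif_window Λ hcl γ hγ
  -- coordinates of iterates
  have hSk : ∀ (k : ℕ) (x : Λ) (i : ℤ), ((S^[k]) x : ℤ → A) i = (x : ℤ → A) (i + k) := by
    intro k
    induction k with
    | zero => intro x i; simp
    | succ k ih =>
      intro x i
      rw [Function.iterate_succ_apply, ih (S x) i, hS]
      have h1 : i + (k : ℤ) + 1 = i + ((k + 1 : ℕ) : ℤ) := by push_cast; ring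
      rw [h1]
  -- descent step
  have hstep : ∀ (k : ℕ) (x : Λ),
      γ ((S^[k]) x) = ℓ ((x : ℤ → A) k) * γ ((S^[k+1]) x) * (ℓ' ((x : ℤ → A) k))⁻¹ := by
    intro k x
    have h := hco ((S^[k]) x)
    rw [hSk k x 0] at h
    simp only [zero_add] at h
    rw [← Function.iterate_succ_apply' S k x] at h
    rw [h]; group
  intro x y hxy
  -- coords agreement at window for S^[N]
  have hbase : γ ((S^[N]) x) = γ ((S^[N]) y) := by
    apply hN
    intro n hn
    rw [hSk, hSk]
    apply hxy
    have : -(N : ℤ) ≤ n := neg_le_of_abs_le hn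
    linarith
  have hdesc : ∀ j : ℕ, j ≤ N → γ ((S^[N - j]) x) = γ ((S^[N - j]) y) := by
    intro j
    induction j with
    | zero => intro _; simpa using hbase
    | succ j ih =>
      intro hj
      have hj' : j ≤ N := Nat.le_of_succ_le hj
      have hk : N - j = (N - (j + 1)) + 1 := by omega
      have hcoord : (x : ℤ → A) ((N - (j+1) : ℕ) : ℤ) = (y : ℤ → A) ((N - (j+1) : ℕ) : ℤ) :=
        hxy _ (by positivity)
      rw [hstep (N - (j+1)) x, hstep (N - (j+1)) y, hcoord, ← hk, ih hj']
  have := hdesc N le_rfl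
  simpa using this
end

section
/- Let Λ be a subshift over Σ, G a finite group, ℓ, ℓ' : Σ → G, and γ : Λ → G continuous with τ_ℓ(x) = γ(x)·τ_{ℓ'}(x)·γ(σ(x))⁻¹ for all x ∈ Λ, where τ_ℓ(x) = ℓ(x_0), τ_{ℓ'}(x) = ℓ'(x_0). If x, y ∈ Λ satisfy x_n = y_n for all n ≤ -1, then γ(x) = γ(y). -/
/-- if `γ` is a continuous transfer function between the one-block skewing
functions `τ_ℓ` and `τ_{ℓ'}` on a subshift `Λ`, then `γ(x)` depends only on the
left half `(x_n)_{n ≤ -1}` of `x`. -/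
theorem stmt_6 {A : Type*} [Fintype A] [TopologicalSpace A] [DiscreteTopology A]
    {G : Type*} [Group G] [Fintype G] [TopologicalSpace G] [DiscreteTopology G]
    (Λ : Set (ℤ → A)) (hcl : IsClosed Λ)
    (hinv : (fun x : ℤ → A => fun i => x (i + 1)) '' Λ = Λ)
    (S : Λ → Λ) (hS : ∀ (x : Λ) (i : ℤ), (S x : ℤ → A) i = (x : ℤ → A) (i + 1))
    (ℓ ℓ' : A → G)
    (γ : Λ → G) (hγ : Continuous γ)
    (hco : ∀ x : Λ, ℓ ((x : ℤ → A) 0) = γ x * ℓ' ((x : ℤ → A) 0) * (γ (S x))⁻¹) :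
    ∀ x y : Λ, (∀ n : ℤ, n ≤ -1 → (x : ℤ → A) n = (y : ℤ → A) n) → γ x = γ y := by
  -- the inverse shift stays in Λ
  have hTmem : ∀ x : Λ, (fun i => (x : ℤ → A) (i - 1)) ∈ Λ := by
    intro x
    have hx : (x : ℤ → A) ∈ (fun x : ℤ → A => fun i => x (i + 1)) '' Λ := by
      rw [hinv]; exact x.2
    obtain ⟨z, hzΛ, hz⟩ := hx
    have hzeq : z = fun i => (x : ℤ → A) (i - 1) := by
      funext i
      have h := congrFun hz (i - 1)
      simpa using h
    rwa [hzeq] at hzΛ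
  set T : Λ → Λ := fun x => ⟨fun i => (x : ℤ → A) (i - 1), hTmem x⟩ with hT
  have hTcoord : ∀ (x : Λ) (i : ℤ), ((T x : Λ) : ℤ → A) i = (x : ℤ → A) (i - 1) :=
    fun x i => rfl
  have hST : ∀ x : Λ, S (T x) = x := by
    intro x; apply Subtype.ext; funext i
    rw [hS, hTcoord]; norm_num
  have key : ∀ x : Λ, γ x = (ℓ ((x : ℤ → A) (-1)))⁻¹ * γ (T x) * ℓ' ((x : ℤ → A) (-1)) := by
    intro x
    have h := hco (T x)
    rw [hST] at h
    have h0 : ((T x : Λ) : ℤ → A) 0 = (x : ℤ → A) (-1) := by rw [hTcoord]; norm_num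
    rw [h0] at h
    rw [h]; group
  -- iterated coordinates
  have hiter : ∀ (k : ℕ) (x : Λ) (n : ℤ), ((T^[k] x : Λ) : ℤ → A) n = (x : ℤ → A) (n - k) := by
    intro k
    induction k with
    | zero => intro x n; simp
    | succ k ih =>
      intro x n
      rw [Function.iterate_succ_apply', hTcoord, ih]
      push_cast
      ring_nf
  -- main induction
  have main : ∀ (k : ℕ) (x y : Λ), (∀ n : ℤ, n ≤ -1 → (x : ℤ → A) n = (y : ℤ → A) n) →
      γ (T^[k] x) = γ (T^[k] y) → γ x = γ y := by
    intro k
    induction k with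
    | zero => intro x y _ h; simpa using h
    | succ k ih =>
      intro x y hxy h
      have hTxy : ∀ n : ℤ, n ≤ -1 → ((T x : Λ) : ℤ → A) n = ((T y : Λ) : ℤ → A) n := by
        intro n hn; rw [hTcoord, hTcoord]; exact hxy _ (by omega)
      have h' : γ (T^[k] (T x)) = γ (T^[k] (T y)) := by
        rwa [← Function.iterate_succ_apply, ← Function.iterate_succ_apply]
      have heq := ih (T x) (T y) hTxy h'
      rw [key x, key y, hxy (-1) (by norm_num), heq]
  intro x y hxy
  -- compactness
  haveI : CompactSpace (ℤ → A) := by infer_instance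
  have hcpt : IsCompact Λ := hcl.isCompact
  haveI : CompactSpace Λ := isCompact_iff_compactSpace.mp hcpt
  set u : ℕ → Λ × Λ := fun k => (T^[k] x, T^[k] y) with hu
  obtain ⟨p, -, φ, hφ, hconv⟩ :=
    (isCompact_univ (X := Λ × Λ)).tendsto_subseq (x := u) (fun n => Set.mem_univ _)
  have hconv1 : Filter.Tendsto (fun j => T^[φ j] x) Filter.atTop (nhds p.1) :=
    (continuous_fst.tendsto p).comp hconv
  have hconv2 : Filter.Tendsto (fun j => T^[φ j] y) Filter.atTop (nhds p.2) :=
    (continuous_snd.tendsto p).comp hconv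
  -- p.1 = p.2
  have hpeq : p.1 = p.2 := by
    apply Subtype.ext; funext n
    have hc : Continuous fun z : Λ => (z : ℤ → A) n :=
      (continuous_apply n).comp continuous_subtype_val
    have ha := (hc.tendsto p.1).comp hconv1
    have hb := (hc.tendsto p.2).comp hconv2
    refine tendsto_nhds_unique (ha.congr' ?_) hb
    filter_upwards [Filter.eventually_atTop.mpr ⟨(n + 1).toNat, fun j hj => hj⟩] with j hj
    show ((T^[φ j] x : Λ) : ℤ → A) n = ((T^[φ j] y : Λ) : ℤ → A) n
    rw [hiter, hiter]
    have hjφ : (n + 1).toNat ≤ φ j := le_trans hj (hφ.le_apply)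
    refine hxy _ ?_
    have : (n + 1 : ℤ) ≤ φ j := le_trans (Int.self_le_toNat _) (by exact_mod_cast hjφ)
    omega
  -- eventually γ agrees
  have hopen : IsOpen (γ ⁻¹' {γ p.1}) := (isOpen_discrete _).preimage hγ
  have h1 : ∀ᶠ j in Filter.atTop, γ (T^[φ j] x) = γ p.1 :=
    hconv1.eventually (hopen.mem_nhds rfl)
  have h2 : ∀ᶠ j in Filter.atTop, γ (T^[φ j] y) = γ p.1 := by
    have : p.2 ∈ γ ⁻¹' {γ p.1} := by rw [← hpeq]; rfl
    exact hconv2.eventually (hopen.mem_nhds this)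
  obtain ⟨j, hj1, hj2⟩ := (h1.and h2).exists
  exact main (φ j) x y hxy (hj1.trans hj2.symm)
end
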